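/- arXiv:1707.00631 — 7 statements merged into one kernel-verified Lean document; each statement's English description precedes it below -/
import Mathlib

section
/- For a nonzero vector x = (a_1,...,a_n) in ℂ^n, the infimum of the squared ℓ2 distances from x/‖x‖_2 to the set of constant modulus vectors equals 2 - (2/(√n·‖x‖_2))·∑_{i=1}^n |a_i|, and this infimum is attained. -/
/-!
With `u = x / ‖x‖` and `y` of constant modulus `1 / √n`, both vectors are unit vectors, so
`‖u - y‖² = 2 - 2 Re ⟪u, y⟫`, and `Re ⟪u, y⟫ ≤ ∑ |uᵢ| |yᵢ| = (1 / √n) ∑ |uᵢ|`, with equality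
when every `yᵢ` has the phase of `uᵢ`.
-/

open Finset

open Complex in
theorem Complex.inner_exp_arg_mul_I (z : ℂ) : inner ℂ z (exp (arg z * I)) = ‖z‖ := by
  have hz := norm_mul_exp_arg_mul_I z
  set e := exp (arg z * I)
  have he : ‖e‖ = 1 := norm_exp_ofReal_mul_I _
  rw [RCLike.inner_apply, ← hz, map_mul, conj_ofReal, mul_left_comm, mul_conj,
    normSq_eq_norm_sq]
  simp [he]

namespace EuclideanSpace

variable {𝕜 ι : Type*} [RCLike 𝕜] [Fintype ι]

theorem norm_sq_of_forall_norm_eq {y : EuclideanSpace 𝕜 ι} {c : ℝ} (hy : ∀ i, ‖y i‖ = c) :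
    ‖y‖ ^ 2 = Fintype.card ι * c ^ 2 := by
  simp [norm_sq_eq, hy]

theorem re_inner_le_sum_norm_mul_norm (u y : EuclideanSpace 𝕜 ι) :
    RCLike.re (inner 𝕜 u y) ≤ ∑ i, ‖u i‖ * ‖y i‖ := by
  rw [PiLp.inner_apply, map_sum]
  exact sum_le_sum fun i _ => re_inner_le_norm _ _

noncomputable def phaseAligned (c : ℝ) (u : EuclideanSpace ℂ ι) : EuclideanSpace ℂ ι :=
  WithLp.toLp 2 fun i => c * Complex.exp (Complex.arg (u i) * Complex.I)

omit [Fintype ι] in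
theorem norm_phaseAligned_apply {c : ℝ} (hc : 0 ≤ c) (u : EuclideanSpace ℂ ι) (i : ι) :
    ‖phaseAligned c u i‖ = c := by
  simp [phaseAligned, abs_of_nonneg hc]

theorem inner_phaseAligned (c : ℝ) (u : EuclideanSpace ℂ ι) :
    inner ℂ u (phaseAligned c u) = c * ∑ i, ‖u i‖ := by
  simp only [PiLp.inner_apply, phaseAligned]
  push_cast
  rw [mul_sum]
  refine sum_congr rfl fun i _ => ?_
  rw [RCLike.inner_apply, mul_assoc, ← RCLike.inner_apply, Complex.inner_exp_arg_mul_I]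

theorem isLeast_norm_sub_sq_of_forall_norm_eq (u : EuclideanSpace ℂ ι) {c : ℝ} (hc : 0 ≤ c) :
    IsLeast {d : ℝ | ∃ y : EuclideanSpace ℂ ι, (∀ i, ‖y i‖ = c) ∧ d = ‖u - y‖ ^ 2}
      (‖u‖ ^ 2 - 2 * c * ∑ i, ‖u i‖ + Fintype.card ι * c ^ 2) := by
  constructor
  · refine ⟨phaseAligned c u, norm_phaseAligned_apply hc u, ?_⟩
    rw [norm_sub_sq (𝕜 := ℂ), inner_phaseAligned,
      norm_sq_of_forall_norm_eq (norm_phaseAligned_apply hc u)]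
    simp [mul_assoc]
  · rintro d ⟨y, hy, rfl⟩
    have hre := re_inner_le_sum_norm_mul_norm u y
    simp only [hy, ← sum_mul] at hre
    rw [norm_sub_sq (𝕜 := ℂ), norm_sq_of_forall_norm_eq hy]
    nlinarith

end EuclideanSpace

theorem stmt1 {n : ℕ} (x : EuclideanSpace ℂ (Fin n)) (hx : x ≠ 0) :
    IsLeast {d : ℝ | ∃ y : EuclideanSpace ℂ (Fin n),
        (∀ i, ‖y i‖ = 1 / Real.sqrt n) ∧ d = ‖(‖x‖⁻¹ • x) - y‖ ^ 2}
      (2 - 2 / (Real.sqrt n * ‖x‖) * ∑ i, ‖x i‖) := by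
  have hn : (n : ℝ) ≠ 0 := Nat.cast_ne_zero.2 <| by rintro rfl; exact hx (Subsingleton.elim _ _)
  convert EuclideanSpace.isLeast_norm_sub_sq_of_forall_norm_eq (‖x‖⁻¹ • x)
    (c := 1 / Real.sqrt n) (by positivity) using 1
  have hxn : ‖x‖ ≠ 0 := norm_ne_zero_iff.2 hx
  have hsqrt : Real.sqrt n ^ 2 = n := Real.sq_sqrt (Nat.cast_nonneg n)
  simp only [PiLp.smul_apply, norm_smul, norm_inv, norm_norm,
    ← mul_sum, Fintype.card_fin]
  field_simp
  linear_combination ‖x‖ * hsqrt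
end

section
/- For a nonzero vector x in ℂ^n and real c ≥ 0, the minimum ℓ2 distance from x/‖x‖_2 to the set of constant modulus vectors equals √c if and only if ‖x‖_1 = (1 - c/2)·√n·‖x‖_2. -/
/-! Coordinatewise, the closest point of norm `r` to `a` is `a` rescaled to norm `r`, at distance
`|‖a‖ - r|`; the reverse triangle inequality shows nothing does better. Hence the squared distance
from a unit vector `u ∈ ℂⁿ` to the constant modulus vectors is
`∑ (|uᵢ| - 1/√n)² = ‖u‖₂² - 2‖u‖₁/√n + 1 = 2 - 2‖u‖₁/√n`, and for `u = x/‖x‖₂` this equals `c`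
exactly when `‖x‖₁ = (1 - c/2)√n‖x‖₂`. -/

open Finset

theorem exists_norm_eq_and_norm_sub_eq_abs {E : Type*} [NormedAddCommGroup E] [NormedSpace ℝ E]
    [Nontrivial E] (a : E) {r : ℝ} (hr : 0 ≤ r) : ∃ b : E, ‖b‖ = r ∧ ‖a - b‖ = |‖a‖ - r| := by
  rcases eq_or_ne a 0 with rfl | ha
  · obtain ⟨b, hb⟩ := exists_norm_eq E hr
    exact ⟨b, hb, by simp [hb, abs_of_nonneg hr]⟩
  · have ha' : 0 < ‖a‖ := norm_pos_iff.2 ha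
    refine ⟨(r / ‖a‖) • a, ?_, ?_⟩
    · rw [norm_smul, Real.norm_of_nonneg (by positivity), div_mul_cancel₀ _ ha'.ne']
    · calc ‖a - (r / ‖a‖) • a‖ = |1 - r / ‖a‖| * ‖a‖ := by
            rw [← Real.norm_eq_abs, ← norm_smul, sub_smul, one_smul]
        _ = |‖a‖ - r| := by
            rw [← abs_of_pos ha', ← abs_mul, abs_of_pos ha', sub_mul, one_mul,
              div_mul_cancel₀ _ ha'.ne']

section EuclideanSpace

variable {𝕜 ι : Type*} [RCLike 𝕜] [Fintype ι]

theorem sqrt_sum_sq_norm_sub_le_norm_sub (u y : EuclideanSpace 𝕜 ι) {r : ℝ}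
    (hy : ∀ i, ‖y i‖ = r) : √(∑ i, (‖u i‖ - r) ^ 2) ≤ ‖u - y‖ := by
  rw [EuclideanSpace.norm_eq]
  refine Real.sqrt_le_sqrt (sum_le_sum fun i _ => ?_)
  rw [← hy i, ← sq_abs]
  exact pow_le_pow_left₀ (abs_nonneg _) (abs_norm_sub_norm_le _ _) 2

theorem exists_norm_apply_eq_and_norm_sub_eq (u : EuclideanSpace 𝕜 ι) {r : ℝ} (hr : 0 ≤ r) :
    ∃ y : EuclideanSpace 𝕜 ι, (∀ i, ‖y i‖ = r) ∧ ‖u - y‖ = √(∑ i, (‖u i‖ - r) ^ 2) := by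
  choose b hb_norm hb_dist using fun i => exists_norm_eq_and_norm_sub_eq_abs (u i) hr
  refine ⟨WithLp.toLp 2 b, hb_norm, ?_⟩
  rw [EuclideanSpace.norm_eq]
  simp only [PiLp.sub_apply, hb_dist, sq_abs]

theorem isLeast_norm_sub_of_norm_apply_eq (u : EuclideanSpace 𝕜 ι) {r : ℝ} (hr : 0 ≤ r) :
    IsLeast {d : ℝ | ∃ y : EuclideanSpace 𝕜 ι, (∀ i, ‖y i‖ = r) ∧ d = ‖u - y‖}
      (√(∑ i, (‖u i‖ - r) ^ 2)) := by
  obtain ⟨y₀, hy₀, hdist⟩ := exists_norm_apply_eq_and_norm_sub_eq u hr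
  refine ⟨⟨y₀, hy₀, hdist.symm⟩, ?_⟩
  rintro d ⟨y, hy, rfl⟩
  exact sqrt_sum_sq_norm_sub_le_norm_sub u y hy

theorem sum_sq_norm_apply_sub (u : EuclideanSpace 𝕜 ι) (r : ℝ) :
    ∑ i, (‖u i‖ - r) ^ 2 = ‖u‖ ^ 2 - 2 * r * ∑ i, ‖u i‖ + Fintype.card ι * r ^ 2 := by
  have hexpand : ∀ i, (‖u i‖ - r) ^ 2 = ‖u i‖ ^ 2 - 2 * r * ‖u i‖ + r ^ 2 := fun i => by ring
  simp only [hexpand, sum_add_distrib, sum_sub_distrib, ← mul_sum, sum_const, card_univ,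
    nsmul_eq_mul, EuclideanSpace.norm_sq_eq]

end EuclideanSpace

theorem stmt2 {n : ℕ} (x : EuclideanSpace ℂ (Fin n)) (hx : x ≠ 0) (c : ℝ) (hc : 0 ≤ c) :
    IsLeast {d : ℝ | ∃ y : EuclideanSpace ℂ (Fin n),
        (∀ i, ‖y i‖ = 1 / Real.sqrt n) ∧ d = ‖(‖x‖⁻¹ • x) - y‖} (Real.sqrt c) ↔
    (∑ i, ‖x i‖) = (1 - c / 2) * Real.sqrt n * ‖x‖ := by
  have hn : (0 : ℝ) < n := by
    rcases Nat.eq_zero_or_pos n with rfl | hn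
    · exact absurd (Subsingleton.elim x 0) hx
    · exact_mod_cast hn
  have hx' : 0 < ‖x‖ := norm_pos_iff.2 hx
  have hsqrt : 0 < √(n : ℝ) := Real.sqrt_pos.2 hn
  set u := ‖x‖⁻¹ • x
  have hu : ‖u‖ = 1 := by rw [norm_smul, norm_inv, norm_norm, inv_mul_cancel₀ hx'.ne']
  have hsum : ∑ i, ‖u i‖ = ‖x‖⁻¹ * ∑ i, ‖x i‖ := by
    simp only [u, mul_sum, PiLp.smul_apply, norm_smul, norm_inv, norm_norm]
  have hdist : ∑ i, (‖u i‖ - 1 / √(n : ℝ)) ^ 2 = 2 - 2 * (∑ i, ‖x i‖) / (√n * ‖x‖) := by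
    rw [sum_sq_norm_apply_sub, hu, hsum, Fintype.card_fin, div_pow, Real.sq_sqrt hn.le]
    field_simp
    ring
  rw [(isLeast_norm_sub_of_norm_apply_eq u (by positivity)).isLeast_iff_eq, eq_comm,
    Real.sqrt_inj hc (sum_nonneg fun i _ => sq_nonneg _), hdist]
  constructor <;> intro h
  · field_simp at h ⊢
    linarith
  · rw [h]
    field_simp
    ring
end

section
/- Let S be a subspace of H = ℝ^n or ℂ^n, let P be the orthogonal projection onto S, and let c ∈ ℝ. Then every unit vector x ∈ S satisfies ‖x‖_1 ≤ (1 - c/2)·√n if and only if the ℓ2 distance from every unit vector in S to every constant modulus vector is at least √c. -/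
open Finset

/-!
Both sides are statements about each unit vector `x ∈ S` separately. For unit vectors,
`‖x - y‖² = 2 - 2 Re⟪x, y⟫`, so the distance condition says `Re⟪x, y⟫ ≤ 1 - c/2` for every
constant modulus `y`. The maximum of `Re⟪x, y⟫` over such `y` is `‖x‖₁ / √n`: it is bounded by
`∑ |xᵢ| |yᵢ|`, with equality when `yᵢ` carries the phase of `xᵢ`.
-/

namespace RCLike

variable {𝕜 : Type*} [RCLike 𝕜]

/-- The value `1` at `z = 0` keeps the modulus equal to one everywhere. -/
noncomputable def unitPhase (z : 𝕜) : 𝕜 := if z = 0 then 1 else z / (‖z‖ : 𝕜)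

theorem norm_unitPhase (z : 𝕜) : ‖unitPhase z‖ = 1 := by
  unfold unitPhase
  split_ifs with hz
  · exact norm_one
  · rw [norm_div, norm_ofReal, abs_norm, div_self (norm_ne_zero_iff.mpr hz)]

theorem conj_mul_unitPhase (z : 𝕜) : starRingEnd 𝕜 z * unitPhase z = ‖z‖ := by
  unfold unitPhase
  split_ifs with hz
  · simp [hz]
  · have hz' : (‖z‖ : 𝕜) ≠ 0 := ofReal_ne_zero.mpr (norm_ne_zero_iff.mpr hz)
    rw [mul_div_assoc', conj_mul, ← ofReal_pow, ofReal_pow, pow_two, mul_div_cancel_right₀ _ hz']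

end RCLike

theorem sqrt_le_norm_sub_iff_re_inner_le {𝕜 E : Type*} [RCLike 𝕜] [SeminormedAddCommGroup E]
    [InnerProductSpace 𝕜 E] {x y : E} (hx : ‖x‖ = 1) (hy : ‖y‖ = 1) (c : ℝ) :
    √c ≤ ‖x - y‖ ↔ RCLike.re (inner 𝕜 x y) ≤ 1 - c / 2 := by
  rw [Real.sqrt_le_left (norm_nonneg _), @norm_sub_sq 𝕜, hx, hy]
  constructor <;> intro h <;> linarith

namespace EuclideanSpace

variable {𝕜 : Type*} [RCLike 𝕜] {n : ℕ}

theorem pos_of_norm_eq_one {x : EuclideanSpace 𝕜 (Fin n)} (hx : ‖x‖ = 1) : 0 < n := by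
  rcases Nat.eq_zero_or_pos n with rfl | hn
  · simp [Subsingleton.elim x 0] at hx
  · exact hn

theorem norm_eq_one_of_forall_norm_apply_eq (hn : 0 < n) {y : EuclideanSpace 𝕜 (Fin n)}
    (hy : ∀ i, ‖y i‖ = 1 / √n) : ‖y‖ = 1 := by
  have hn' : (n : ℝ) ≠ 0 := by exact_mod_cast hn.ne'
  simp [EuclideanSpace.norm_eq, hy, hn']

theorem re_inner_le_of_forall_norm_apply_eq (x : EuclideanSpace 𝕜 (Fin n))
    {y : EuclideanSpace 𝕜 (Fin n)} (hy : ∀ i, ‖y i‖ = 1 / √n) :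
    RCLike.re (inner 𝕜 x y) ≤ (∑ i, ‖x i‖) / √n :=
  calc RCLike.re (inner 𝕜 x y) = ∑ i, RCLike.re (inner 𝕜 (x i) (y i)) := by
        rw [PiLp.inner_apply, map_sum]
    _ ≤ ∑ i, ‖x i‖ * ‖y i‖ := sum_le_sum fun i _ => re_inner_le_norm (x i) (y i)
    _ = (∑ i, ‖x i‖) / √n := by simp only [hy, mul_one_div, sum_div]

theorem exists_forall_norm_apply_eq_re_inner_eq (x : EuclideanSpace 𝕜 (Fin n)) :
    ∃ y : EuclideanSpace 𝕜 (Fin n), (∀ i, ‖y i‖ = 1 / √n) ∧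
      RCLike.re (inner 𝕜 x y) = (∑ i, ‖x i‖) / √n := by
  refine ⟨WithLp.toLp 2 fun i => ((1 / √n : ℝ) : 𝕜) * RCLike.unitPhase (x i), fun i => ?_, ?_⟩
  · simp [RCLike.norm_unitPhase]
  · simp only [PiLp.inner_apply, RCLike.inner_apply', mul_left_comm _ ((1 / √n : ℝ) : 𝕜),
      RCLike.conj_mul_unitPhase, ← RCLike.ofReal_mul, RCLike.ofReal_re, map_sum, sum_div]
    simp only [one_div_mul_eq_div]

theorem forall_sqrt_le_norm_sub_iff {x : EuclideanSpace 𝕜 (Fin n)} (hx : ‖x‖ = 1) (c : ℝ) :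
    (∀ y : EuclideanSpace 𝕜 (Fin n), (∀ i, ‖y i‖ = 1 / √n) → √c ≤ ‖x - y‖) ↔
      ∑ i, ‖x i‖ ≤ (1 - c / 2) * √n := by
  have hn := pos_of_norm_eq_one hx
  have hy_norm {y : EuclideanSpace 𝕜 (Fin n)} (hy : ∀ i, ‖y i‖ = 1 / √n) :
      √c ≤ ‖x - y‖ ↔ RCLike.re (inner 𝕜 x y) ≤ 1 - c / 2 :=
    sqrt_le_norm_sub_iff_re_inner_le hx (norm_eq_one_of_forall_norm_apply_eq hn hy) c
  rw [← div_le_iff₀ (by positivity)]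
  constructor
  · intro h
    obtain ⟨y, hy, hxy⟩ := exists_forall_norm_apply_eq_re_inner_eq x
    exact hxy ▸ (hy_norm hy).mp (h y hy)
  · exact fun h y hy => (hy_norm hy).mpr ((re_inner_le_of_forall_norm_apply_eq x hy).trans h)

end EuclideanSpace

theorem stmt5_general {𝕜 : Type*} [RCLike 𝕜] {n : ℕ}
    (S : Submodule 𝕜 (EuclideanSpace 𝕜 (Fin n))) (c : ℝ) :
    (∀ x ∈ S, ‖x‖ = 1 → (∑ i, ‖x i‖) ≤ (1 - c / 2) * Real.sqrt n) ↔
    (∀ x ∈ S, ‖x‖ = 1 → ∀ y : EuclideanSpace 𝕜 (Fin n),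
      (∀ i, ‖y i‖ = 1 / Real.sqrt n) → Real.sqrt c ≤ ‖x - y‖) :=
  forall₂_congr fun _ _ => forall_congr' fun hx =>
    (EuclideanSpace.forall_sqrt_le_norm_sub_iff hx c).symm

theorem stmt5 {𝕜 : Type*} [RCLike 𝕜] {n : ℕ}
    (S : Submodule 𝕜 (EuclideanSpace 𝕜 (Fin n))) (c : ℝ) (hc0 : 0 ≤ c) (hc2 : c ≤ 2) :
    (∀ x ∈ S, ‖x‖ = 1 → (∑ i, ‖x i‖) ≤ (1 - c / 2) * Real.sqrt n) ↔
    (∀ x ∈ S, ‖x‖ = 1 → ∀ y : EuclideanSpace 𝕜 (Fin n),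
      (∀ i, ‖y i‖ = 1 / Real.sqrt n) → Real.sqrt c ≤ ‖x - y‖) :=
  stmt5_general S c
end

section
/- Let S be a subspace of H = ℝ^n or ℂ^n with orthogonal projection P, and let 0 ≤ c ≤ 2. Then every unit vector x ∈ S satisfies ‖x‖_1 ≤ (1 - c/2)·√n if and only if ‖Px‖_2 ≤ 1 - c/2 for every constant modulus vector x. -/
/-!
Both conditions say that `‖⟪x, y⟫‖ ≤ 1 - c/2` for every unit vector `x ∈ S` and every constant
modulus vector `y`. Against vectors whose entries all have modulus `r`, the largest inner product
with `x` is `r ‖x‖₁`, attained by aligning the phases of `y` with those of `x`; and since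
`⟪x, y⟫ = ⟪x, P y⟫` for `x ∈ S`, the largest inner product of `y` with a unit vector of `S` is
`‖P y‖`.
-/

open Finset ComplexConjugate

theorem norm_le_iff_forall_norm_inner_le {𝕜 F : Type*} [RCLike 𝕜] [NormedAddCommGroup F]
    [InnerProductSpace 𝕜 F] {v : F} {t : ℝ} (ht : 0 ≤ t) :
    ‖v‖ ≤ t ↔ ∀ u : F, ‖u‖ = 1 → ‖inner 𝕜 u v‖ ≤ t := by
  refine ⟨fun h u hu => (norm_inner_le_norm u v).trans (by rwa [hu, one_mul]), fun h => ?_⟩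
  rcases eq_or_ne v 0 with rfl | hv
  · simpa using ht
  have hv' : 0 < ‖v‖ := norm_pos_iff.mpr hv
  have hunit : ‖(‖v‖⁻¹ : 𝕜) • v‖ = 1 := by
    rw [norm_smul, norm_inv, RCLike.norm_ofReal, abs_of_pos hv', inv_mul_cancel₀ hv'.ne']
  calc ‖v‖ = ‖inner 𝕜 ((‖v‖⁻¹ : 𝕜) • v) v‖ := by
        rw [inner_smul_left, inner_self_eq_norm_sq_to_K, norm_mul, norm_pow, map_inv₀,
          RCLike.conj_ofReal, norm_inv, RCLike.norm_ofReal, abs_of_pos hv']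
        field_simp
    _ ≤ t := h _ hunit

theorem Submodule.norm_orthogonalProjectionOnto_le_iff {𝕜 E : Type*} [RCLike 𝕜]
    [NormedAddCommGroup E] [InnerProductSpace 𝕜 E] (K : Submodule 𝕜 E) [K.HasOrthogonalProjection]
    (v : E) {t : ℝ} (ht : 0 ≤ t) :
    ‖(K.orthogonalProjectionOnto v : E)‖ ≤ t ↔ ∀ u ∈ K, ‖u‖ = 1 → ‖inner 𝕜 u v‖ ≤ t := by
  rw [norm_coe, norm_le_iff_forall_norm_inner_le (𝕜 := 𝕜) ht, Subtype.forall]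
  simp only [coe_norm, inner_orthogonalProjectionOnto_eq_of_mem_left]

namespace RCLike

variable {𝕜 : Type*} [RCLike 𝕜]

-- `0` is given phase `1`, so that every phase has norm one.
noncomputable def phase (z : 𝕜) : 𝕜 :=
  if z = 0 then 1 else z / ‖z‖

theorem norm_phase (z : 𝕜) : ‖phase z‖ = 1 := by
  unfold phase
  split_ifs with hz
  · exact norm_one
  · rw [norm_div, norm_ofReal, abs_norm, div_self (norm_ne_zero_iff.mpr hz)]

theorem phase_mul_conj (z : 𝕜) : phase z * conj z = ‖z‖ := by
  unfold phase
  split_ifs with hz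
  · simp [hz]
  · have : (‖z‖ : 𝕜) ≠ 0 := ofReal_ne_zero.mpr (norm_ne_zero_iff.mpr hz)
    rw [div_mul_eq_mul_div, mul_comm, conj_mul]
    field_simp

end RCLike

theorem EuclideanSpace.mul_sum_norm_le_iff {𝕜 ι : Type*} [RCLike 𝕜] [Fintype ι]
    (x : EuclideanSpace 𝕜 ι) {r s : ℝ} (hr : 0 ≤ r) :
    r * ∑ i, ‖x i‖ ≤ s ↔ ∀ y : EuclideanSpace 𝕜 ι, (∀ i, ‖y i‖ = r) → ‖inner 𝕜 x y‖ ≤ s := by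
  constructor
  · intro h y hy
    calc ‖inner 𝕜 x y‖ ≤ ∑ i, ‖y i * conj (x i)‖ := by
          rw [PiLp.inner_apply]; exact norm_sum_le _ _
      _ = r * ∑ i, ‖x i‖ := by simp [mul_sum, hy]
      _ ≤ s := h
  · intro h
    let y : EuclideanSpace 𝕜 ι := WithLp.toLp 2 fun i => (r : 𝕜) * RCLike.phase (x i)
    have hy : ∀ i, ‖y i‖ = r := fun i => by
      simp [y, RCLike.norm_phase, abs_of_nonneg hr]
    have hxy : inner 𝕜 x y = ((r * ∑ i, ‖x i‖ : ℝ) : 𝕜) := by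
      simp [y, PiLp.inner_apply, mul_sum, mul_assoc, RCLike.phase_mul_conj]
    have := h y hy
    rwa [hxy, RCLike.norm_ofReal, abs_of_nonneg (by positivity)] at this

theorem stmt6_general {𝕜 : Type*} [RCLike 𝕜] {n : ℕ}
    (S : Submodule 𝕜 (EuclideanSpace 𝕜 (Fin n))) (c : ℝ) (hc2 : c ≤ 2) :
    (∀ x ∈ S, ‖x‖ = 1 → (∑ i, ‖x i‖) ≤ (1 - c / 2) * Real.sqrt n) ↔
    (∀ x : EuclideanSpace 𝕜 (Fin n), (∀ i, ‖x i‖ = 1 / Real.sqrt n) →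
      ‖(Submodule.orthogonalProjection S x : EuclideanSpace 𝕜 (Fin n))‖ ≤ 1 - c / 2) := by
  have ht : 0 ≤ 1 - c / 2 := by linarith
  have hscale : ∀ x : EuclideanSpace 𝕜 (Fin n),
      (∑ i, ‖x i‖) ≤ (1 - c / 2) * Real.sqrt n ↔ 1 / Real.sqrt n * ∑ i, ‖x i‖ ≤ 1 - c / 2 := by
    intro x
    rcases n.eq_zero_or_pos with rfl | hn
    · simpa using ht
    rw [one_div_mul_eq_div, div_le_iff₀ (by positivity)]
  simp only [hscale, EuclideanSpace.mul_sum_norm_le_iff _ (by positivity : 0 ≤ 1 / Real.sqrt n),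
    S.norm_orthogonalProjectionOnto_le_iff _ ht]
  exact ⟨fun h y hy x hx hx1 => h x hx hx1 y hy, fun h x hx hx1 y hy => h y hy x hx hx1⟩

theorem stmt6 {𝕜 : Type*} [RCLike 𝕜] {n : ℕ}
    (S : Submodule 𝕜 (EuclideanSpace 𝕜 (Fin n))) (c : ℝ) (hc0 : 0 ≤ c) (hc2 : c ≤ 2) :
    (∀ x ∈ S, ‖x‖ = 1 → (∑ i, ‖x i‖) ≤ (1 - c / 2) * Real.sqrt n) ↔
    (∀ x : EuclideanSpace 𝕜 (Fin n), (∀ i, ‖x i‖ = 1 / Real.sqrt n) →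
      ‖(Submodule.orthogonalProjection S x : EuclideanSpace 𝕜 (Fin n))‖ ≤ 1 - c / 2) :=
  stmt6_general S c hc2
end

section
/- Let S be an s-dimensional subspace of ℝ^n with P the orthogonal projection onto S, and let {e_1,...,e_n} be the standard orthonormal basis. If the vectors P e_1, ..., P e_n are pairwise orthogonal, then there exists a subset I ⊆ {1,...,n} with |I| = s such that P e_i = e_i for i ∈ I and P e_i = 0 for i ∉ I, so that S = span{e_i : i ∈ I}. -/
/-!
The projection `P` is self-adjoint and idempotent, so `⟪P e_j, P e_i⟫ = ⟪e_j, P e_i⟫`: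
orthogonality of the `P e_i` says that `P e_i` has no component along any `e_j` with `j ≠ i`.
Each `e_i` is therefore an eigenvector of `P`, so it lies in `S` or is killed by `P`, and `S`
is spanned by the basis vectors it contains.
-/

open Finset

open scoped InnerProductSpace

lemma Module.Basis.finrank_span_image_finset {ι R M : Type*} [Ring R] [Nontrivial R]
    [StrongRankCondition R] [AddCommGroup M] [Module R M] (b : Basis ι R M) (I : Finset ι) :
    Module.finrank R (Submodule.span R (b '' I)) = #I := by
  rw [Set.image_eq_range]
  exact (finrank_span_eq_card (b.linearIndependent.comp _ Subtype.val_injective)).trans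
    (Fintype.card_coe I)

namespace Submodule

variable {𝕜 E ι : Type*} [RCLike 𝕜] [NormedAddCommGroup E] [InnerProductSpace 𝕜 E]
  (K : Submodule 𝕜 E) [K.HasOrthogonalProjection]

lemma inner_starProjection_starProjection (u v : E) :
    ⟪K.starProjection u, K.starProjection v⟫_𝕜 = ⟪u, K.starProjection v⟫_𝕜 := by
  rw [inner_starProjection_left_eq_right,
    starProjection_eq_self_iff.2 (K.starProjection_apply_mem v)]

lemma mem_or_starProjection_eq_zero_of_starProjection_eq_smul {v : E} {c : 𝕜}
    (h : K.starProjection v = c • v) : v ∈ K ∨ K.starProjection v = 0 := by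
  by_cases hc : c = 0
  · right
    rw [h, hc, zero_smul]
  · left
    have hv : v = c⁻¹ • K.starProjection v := by rw [h, smul_smul, inv_mul_cancel₀ hc, one_smul]
    rw [hv]
    exact K.smul_mem _ (K.starProjection_apply_mem v)

variable [Fintype ι] (b : OrthonormalBasis ι 𝕜 E)

lemma starProjection_basis_eq_smul {i : ι}
    (h : ∀ j ≠ i, ⟪K.starProjection (b j), K.starProjection (b i)⟫_𝕜 = 0) :
    K.starProjection (b i) = ⟪b i, K.starProjection (b i)⟫_𝕜 • b i := by
  conv_lhs => rw [← b.sum_repr' (K.starProjection (b i))]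
  refine Fintype.sum_eq_single i fun j hj => ?_
  rw [← inner_starProjection_starProjection, h j hj, zero_smul]

lemma basis_mem_or_starProjection_eq_zero
    (h : Pairwise fun i j => ⟪K.starProjection (b i), K.starProjection (b j)⟫_𝕜 = 0) (i : ι) :
    b i ∈ K ∨ K.starProjection (b i) = 0 :=
  K.mem_or_starProjection_eq_zero_of_starProjection_eq_smul <|
    K.starProjection_basis_eq_smul b fun _ hj => h hj

lemma eq_span_basis_mem (h : ∀ i, b i ∈ K ∨ K.starProjection (b i) = 0) :
    K = span 𝕜 (b '' {i | b i ∈ K}) := by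
  refine le_antisymm (fun x hx => ?_) (span_le.2 ?_)
  · rw [← starProjection_eq_self_iff.2 hx, ← b.sum_repr' x, map_sum]
    refine sum_mem fun j _ => ?_
    rw [map_smul]
    rcases h j with hj | hj
    · rw [starProjection_eq_self_iff.2 hj]
      exact smul_mem _ _ (subset_span ⟨j, hj, rfl⟩)
    · rw [hj, smul_zero]
      exact zero_mem _
  · rintro _ ⟨j, hj, rfl⟩
    exact hj

end Submodule

theorem stmt8 {n s : ℕ} (S : Submodule ℝ (EuclideanSpace ℝ (Fin n)))
    (hdim : Module.finrank ℝ S = s)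
    (e : Fin n → EuclideanSpace ℝ (Fin n))
    (he : ∀ i, e i = EuclideanSpace.single i (1 : ℝ))
    (horth : ∀ i j, i ≠ j →
      inner ℝ ((Submodule.orthogonalProjectionOnto S (e i) : EuclideanSpace ℝ (Fin n)))
        ((Submodule.orthogonalProjectionOnto S (e j) : EuclideanSpace ℝ (Fin n))) = (0 : ℝ)) :
    ∃ I : Finset (Fin n), I.card = s ∧
      (∀ i ∈ I, (Submodule.orthogonalProjectionOnto S (e i) : EuclideanSpace ℝ (Fin n)) = e i) ∧
      (∀ i ∉ I, (Submodule.orthogonalProjectionOnto S (e i) : EuclideanSpace ℝ (Fin n)) = 0) ∧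
      S = Submodule.span ℝ (e '' I) := by
  classical
  set b := EuclideanSpace.basisFun (Fin n) ℝ
  obtain rfl : e = b := funext fun i => (he i).trans (EuclideanSpace.basisFun_apply _ _ i).symm
  simp only [Submodule.coe_orthogonalProjectionOnto_apply] at horth ⊢
  have hdich := S.basis_mem_or_starProjection_eq_zero b fun i j => horth i j
  set I := univ.filter fun i => b i ∈ S
  have hspan : S = Submodule.span ℝ (b '' I) := by
    simpa [I] using S.eq_span_basis_mem b hdich
  refine ⟨I, ?_, fun i hi => Submodule.starProjection_eq_self_iff.2 (mem_filter.1 hi).2,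
    fun i hi => (hdich i).resolve_left (by simpa [I] using hi), hspan⟩
  rw [← hdim, hspan, ← b.coe_toBasis, b.toBasis.finrank_span_image_finset]
end

section
/- Let S be an s-dimensional subspace of ℝ^n, with standard orthonormal basis {e_1,...,e_n}. If ‖y‖_1 ≤ √s·‖y‖_2 for all y ∈ S, then there exists a subset I ⊆ {1,...,n} with |I| = s such that S = span{e_i : i ∈ I}. -/
/-!
Let `P` be the orthogonal projection onto `S` and `q x = ⟪x, P x⟫ = ‖P x‖²`. For a sign vector
`σ ∈ {±1}ⁿ`, `q σ = ⟪P σ, σ⟫ ≤ ‖P σ‖₁ ≤ √s ‖P σ‖`, so `q σ ≤ s`. The average of `q` over all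
`2ⁿ` sign vectors is `trace P = s`, hence `q σ = s` for every sign vector. A quadratic form that is
constant on the vertices of the cube has vanishing off-diagonal entries, so every `eᵢ` is an
eigenvector of `P`; it therefore lies in `S` or in `Sᗮ`, and `S` is spanned by the `eᵢ` it contains.
-/

open Finset RealInnerProductSpace

section InnerProductSpace

variable {E : Type*} [NormedAddCommGroup E] [InnerProductSpace ℝ E] (K : Submodule ℝ E)
  [K.HasOrthogonalProjection]

lemma Submodule.inner_starProjection_self_eq_norm_sq (x : E) :
    ⟪x, K.starProjection x⟫ = ‖K.starProjection x‖ ^ 2 := by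
  rw [← real_inner_self_eq_norm_sq, inner_starProjection_left_eq_right,
    K.starProjection_eq_self_iff.mpr (K.starProjection_apply_mem x)]

lemma Submodule.trace_starProjection [FiniteDimensional ℝ E] :
    LinearMap.trace ℝ E K.starProjection = Module.finrank ℝ K :=
  LinearMap.IsProj.trace ⟨K.starProjection_apply_mem, fun _ => K.starProjection_eq_self_iff.mpr⟩

lemma Submodule.mem_or_starProjection_eq_zero_of_eq_smul {v : E} {c : ℝ}
    (hv : K.starProjection v = c • v) : v ∈ K ∨ K.starProjection v = 0 := by
  rcases eq_or_ne c 0 with rfl | hc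
  · exact Or.inr (by rw [hv, zero_smul])
  · refine Or.inl ?_
    rw [← inv_smul_smul₀ hc v, ← hv]
    exact K.smul_mem _ (K.starProjection_apply_mem v)

end InnerProductSpace

lemma real_inner_le_sum_norm_of_abs_le_one {ι : Type*} [Fintype ι] (x σ : EuclideanSpace ℝ ι)
    (hσ : ∀ i, |σ i| ≤ 1) : ⟪x, σ⟫ ≤ ∑ i, ‖x i‖ := by
  rw [PiLp.inner_apply]
  refine sum_le_sum fun i _ => ?_
  calc ⟪x i, σ i⟫ ≤ ‖x i‖ * ‖σ i‖ := real_inner_le_norm _ _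
    _ ≤ ‖x i‖ := mul_le_of_le_one_right (norm_nonneg _) (hσ i)

namespace EuclideanSpace

variable {ι : Type*}

/-- Signs are units of `ℤ`, so that flipping signs is multiplication in the group `ι → ℤˣ`. -/
def signVector (ε : ι → ℤˣ) : EuclideanSpace ℝ ι := WithLp.toLp 2 fun i => ((ε i : ℤ) : ℝ)

@[simp]
lemma signVector_apply (ε : ι → ℤˣ) (i : ι) : signVector ε i = ((ε i : ℤ) : ℝ) := rfl

lemma signVector_mulSingle_neg_one_mul [DecidableEq ι] (ε : ι → ℤˣ) (k : ι) :
    signVector (Pi.mulSingle k (-1) * ε) =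
      signVector ε - (2 * ((ε k : ℤ) : ℝ)) • single k 1 := by
  ext i
  by_cases hik : i = k
  · subst hik
    simp only [signVector_apply, Pi.mul_apply, Pi.mulSingle_eq_same, neg_mul, one_mul,
      Units.val_neg, Int.cast_neg, PiLp.sub_apply, PiLp.smul_apply, PiLp.single_eq_same,
      smul_eq_mul]
    ring
  · simp [hik]

variable [Fintype ι]

lemma inner_starProjection_le_finrank_of_abs_le_one (K : Submodule ℝ (EuclideanSpace ℝ ι))
    (h : ∀ y ∈ K, ∑ i, ‖y i‖ ≤ √(Module.finrank ℝ K) * ‖y‖)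
    (σ : EuclideanSpace ℝ ι) (hσ : ∀ i, |σ i| ≤ 1) :
    ⟪σ, K.starProjection σ⟫ ≤ Module.finrank ℝ K := by
  set y := K.starProjection σ
  have hy : ‖y‖ ^ 2 ≤ √(Module.finrank ℝ K) * ‖y‖ :=
    calc ‖y‖ ^ 2 = ⟪y, σ⟫ := by rw [real_inner_comm, K.inner_starProjection_self_eq_norm_sq]
      _ ≤ ∑ i, ‖y i‖ := real_inner_le_sum_norm_of_abs_le_one y σ hσ
      _ ≤ √(Module.finrank ℝ K) * ‖y‖ := h y (K.starProjection_apply_mem σ)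
  rw [K.inner_starProjection_self_eq_norm_sq]
  nlinarith [Real.sq_sqrt (Nat.cast_nonneg (α := ℝ) (Module.finrank ℝ K)),
    sq_nonneg (√(Module.finrank ℝ K) - ‖y‖)]

variable [DecidableEq ι]

lemma sum_units_mul_units (i k : ι) :
    ∑ ε : ι → ℤˣ, ((ε i : ℤ) : ℝ) * (ε k : ℤ) =
      if i = k then (Fintype.card (ι → ℤˣ) : ℝ) else 0 := by
  split_ifs with hik
  · subst hik
    simp [← Int.cast_mul, ← Units.val_mul, Int.units_mul_self]
  · -- flipping the sign at `i` permutes the cube and negates every term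
    have hflip := Equiv.sum_comp (Equiv.mulLeft (Pi.mulSingle i (-1) : ι → ℤˣ))
      fun ε : ι → ℤˣ => ((ε i : ℤ) : ℝ) * (ε k : ℤ)
    simp only [Equiv.coe_mulLeft, Pi.mul_apply, Pi.mulSingle_eq_same,
      Pi.mulSingle_eq_of_ne (Ne.symm hik), Units.val_neg, Int.cast_neg, neg_mul, one_mul,
      sum_neg_distrib] at hflip
    linarith

lemma signVector_eq_sum (ε : ι → ℤˣ) :
    signVector ε = ∑ i, ((ε i : ℤ) : ℝ) • single i (1 : ℝ) := by
  simpa [inner_single_left] using ((basisFun ι ℝ).sum_repr' (signVector ε)).symm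

lemma sum_inner_signVector_map (T : EuclideanSpace ℝ ι →ₗ[ℝ] EuclideanSpace ℝ ι) :
    ∑ ε : ι → ℤˣ, ⟪signVector ε, T (signVector ε)⟫ =
      Fintype.card (ι → ℤˣ) * LinearMap.trace ℝ _ T := by
  simp only [signVector_eq_sum, map_sum, map_smul, sum_inner, inner_sum, real_inner_smul_left,
    real_inner_smul_right, LinearMap.trace_eq_sum_inner T (basisFun ι ℝ), basisFun_apply,
    mul_sum]
  rw [sum_comm]
  refine sum_congr rfl fun i _ => ?_
  rw [sum_comm]
  simp_rw [← mul_assoc, ← sum_mul, sum_units_mul_units]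
  simp

lemma inner_single_map_single_eq_zero {T : EuclideanSpace ℝ ι →ₗ[ℝ] EuclideanSpace ℝ ι}
    (hT : T.IsSymmetric) {c : ℝ} (hc : ∀ ε, ⟪signVector ε, T (signVector ε)⟫ = c)
    {k l : ι} (hkl : k ≠ l) : ⟪single k (1 : ℝ), T (single l 1)⟫ = 0 := by
  -- the second difference of `x ↦ ⟪x, T x⟫` over the corners
  -- `𝟙, 𝟙 - 2eₖ, 𝟙 - 2eₗ, 𝟙 - 2eₖ - 2eₗ` of the cube is `8 ⟪eₖ, T eₗ⟫`
  have h₀ := hc 1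
  have hk := hc (Pi.mulSingle k (-1) * 1)
  have hl := hc (Pi.mulSingle l (-1) * 1)
  have hkl' := hc (Pi.mulSingle k (-1) * (Pi.mulSingle l (-1) * 1))
  rw [signVector_mulSingle_neg_one_mul] at hk hl
  rw [signVector_mulSingle_neg_one_mul, signVector_mulSingle_neg_one_mul] at hkl'
  simp only [map_sub, map_smul, inner_sub_left, inner_sub_right, real_inner_smul_left,
    real_inner_smul_right, Pi.one_apply, Pi.mulSingle_eq_of_ne hkl, Units.val_one, Int.cast_one,
    mul_one] at hk hl hkl'
  have hsymm := hT (single l 1) (single k 1)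
  rw [real_inner_comm] at hsymm
  linarith

lemma map_single_eq_smul {T : EuclideanSpace ℝ ι →ₗ[ℝ] EuclideanSpace ℝ ι}
    (hT : ∀ k l : ι, k ≠ l → ⟪single k (1 : ℝ), T (single l 1)⟫ = 0) (l : ι) :
    T (single l 1) = ⟪single l (1 : ℝ), T (single l 1)⟫ • single l 1 := by
  conv_lhs => rw [← (basisFun ι ℝ).sum_repr' (T (single l 1))]
  simp only [basisFun_apply]
  exact sum_eq_single l (fun k _ hkl => by rw [hT k l hkl, zero_smul]) (by simp)

lemma finrank_span_single_image (I : Finset ι) :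
    Module.finrank ℝ (Submodule.span ℝ ((fun i => single i (1 : ℝ)) '' (I : Set ι))) = I.card := by
  have hli : LinearIndependent ℝ fun i : (I : Set ι) => single (i : ι) (1 : ℝ) := by
    simpa [Function.comp_def] using
      (basisFun ι ℝ).toBasis.linearIndependent.comp _ Subtype.val_injective
  rw [Set.image_eq_range, finrank_span_eq_card hli]
  simp

variable (K : Submodule ℝ (EuclideanSpace ℝ ι))

lemma inner_signVector_starProjection_eq_finrank
    (h : ∀ y ∈ K, ∑ i, ‖y i‖ ≤ √(Module.finrank ℝ K) * ‖y‖) (ε : ι → ℤˣ) :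
    ⟪signVector ε, K.starProjection (signVector ε)⟫ = Module.finrank ℝ K := by
  -- every corner satisfies `≤`, while the average over all corners is the trace
  have hle ε : ⟪signVector ε, K.starProjection (signVector ε)⟫ ≤ Module.finrank ℝ K :=
    inner_starProjection_le_finrank_of_abs_le_one K h _ fun i => by
      rcases Int.units_eq_one_or (ε i) with h | h <;> simp [h]
  have hsum : ∑ ε : ι → ℤˣ, ⟪signVector ε, K.starProjection (signVector ε)⟫ =
      ∑ _ε : ι → ℤˣ, (Module.finrank ℝ K : ℝ) := by
    have := sum_inner_signVector_map (K.starProjection : EuclideanSpace ℝ ι →ₗ[ℝ] _)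
    rw [K.trace_starProjection, ContinuousLinearMap.coe_coe] at this
    simp [this]
  exact (sum_eq_sum_iff_of_le fun ε _ => hle ε).mp hsum ε (mem_univ ε)

lemma eq_span_single_of_forall_mem_or_starProjection_eq_zero
    (hK : ∀ i, single i (1 : ℝ) ∈ K ∨ K.starProjection (single i 1) = 0) :
    K = Submodule.span ℝ ((fun i => single i (1 : ℝ)) '' {i | single i (1 : ℝ) ∈ K}) := by
  refine le_antisymm (fun x hx => ?_) (Submodule.span_le.mpr ?_)
  · rw [← K.starProjection_eq_self_iff.mpr hx, ← (basisFun ι ℝ).sum_repr' x, map_sum]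
    refine Submodule.sum_mem _ fun i _ => ?_
    rw [map_smul, basisFun_apply]
    rcases hK i with hi | hi
    · rw [K.starProjection_eq_self_iff.mpr hi]
      exact Submodule.smul_mem _ _ (Submodule.subset_span ⟨i, hi, rfl⟩)
    · rw [hi, smul_zero]
      exact Submodule.zero_mem _
  · rintro _ ⟨i, hi, rfl⟩
    exact hi

lemma exists_finset_card_eq_finrank_and_eq_span_single
    (hK : ∀ i, single i (1 : ℝ) ∈ K ∨ K.starProjection (single i 1) = 0) :
    ∃ I : Finset ι, I.card = Module.finrank ℝ K ∧
      K = Submodule.span ℝ ((fun i => single i (1 : ℝ)) '' I) := by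
  classical
  have hspan : K = Submodule.span ℝ ((fun i => single i (1 : ℝ)) ''
      ((univ.filter fun i => single i (1 : ℝ) ∈ K : Finset ι) : Set ι)) := by
    simpa using eq_span_single_of_forall_mem_or_starProjection_eq_zero K hK
  refine ⟨_, ?_, hspan⟩
  rw [← finrank_span_single_image, ← hspan]

end EuclideanSpace

theorem stmt9 {n s : ℕ} (S : Submodule ℝ (EuclideanSpace ℝ (Fin n)))
    (hdim : Module.finrank ℝ S = s)
    (e : Fin n → EuclideanSpace ℝ (Fin n))
    (he : ∀ i, e i = EuclideanSpace.single i (1 : ℝ))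
    (h : ∀ y ∈ S, (∑ i, ‖y i‖) ≤ Real.sqrt s * ‖y‖) :
    ∃ I : Finset (Fin n), I.card = s ∧ S = Submodule.span ℝ (e '' I) := by
  obtain rfl : e = fun i => EuclideanSpace.single i 1 := funext he
  subst hdim
  have hconst := EuclideanSpace.inner_signVector_starProjection_eq_finrank S h
  have hdiag k l (hkl : k ≠ l) := EuclideanSpace.inner_single_map_single_eq_zero
    S.starProjection_isSymmetric hconst hkl
  exact EuclideanSpace.exists_finset_card_eq_finrank_and_eq_span_single S fun i =>
    S.mem_or_starProjection_eq_zero_of_eq_smul (EuclideanSpace.map_single_eq_smul hdiag i)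
end

section
/- Let P be the orthogonal projection onto a subspace of ℝ^n and suppose the vectors P e_1, ..., P e_n (images of the standard basis) are not pairwise orthogonal. Then there exist signs c_1,...,c_n ∈ {−1, 1} such that ‖P(∑_{i=1}^n c_i e_i)‖² > ∑_{i=1}^n ‖P e_i‖². -/
open Finset

open scoped RealInnerProductSpace

/-!
Write `v i = P e_i`. Averaged over all `2 ^ n` sign vectors `c`, the cross terms of
`‖∑ c i • v i‖ ^ 2` cancel, so the average is `∑ ‖v i‖ ^ 2`. If no sign vector exceeded the
average, every one would attain it. But `8 ⟪v i, v j⟫` is the alternating sum of the values at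
the all-ones vector and at the vectors with the signs of `i`, of `j`, and of both flipped, so all
`v i` would be pairwise orthogonal.
-/

section

variable {ι E : Type*} [Fintype ι] [NormedAddCommGroup E] [InnerProductSpace ℝ E]

lemma real_inner_eq_norm_sq_sub_two_smul_div_eight (s x y : E) :
    ⟪x, y⟫ = (‖s‖ ^ 2 - ‖s - (2 : ℝ) • x‖ ^ 2 - ‖s - (2 : ℝ) • y‖ ^ 2
      + ‖s - (2 : ℝ) • (x + y)‖ ^ 2) / 8 := by
  simp only [← real_inner_self_eq_norm_sq, inner_sub_left, inner_sub_right, inner_add_left,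
    inner_add_right, real_inner_smul_left, real_inner_smul_right, real_inner_comm x y]
  ring

lemma norm_sum_smul_sq (v : ι → E) (c : ι → ℝ) :
    ‖∑ i, c i • v i‖ ^ 2 = ∑ k, ∑ l, c k * c l * ⟪v k, v l⟫ := by
  simp_rw [← real_inner_self_eq_norm_sq, sum_inner, inner_sum, real_inner_smul_left,
    real_inner_smul_right, mul_assoc]

variable [DecidableEq ι]

variable (ι) in
noncomputable def signVectors : Finset (ι → ℝ) :=
  Fintype.piFinset fun _ => {1, -1}

lemma mem_signVectors {c : ι → ℝ} : c ∈ signVectors ι ↔ ∀ i, c i = 1 ∨ c i = -1 := by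
  simp [signVectors, Fintype.mem_piFinset]

lemma card_signVectors : #(signVectors ι) = 2 ^ Fintype.card ι := by
  simp [signVectors, card_pair (by norm_num : (1 : ℝ) ≠ -1)]

lemma sum_signVectors_mul_self (k : ι) :
    ∑ c ∈ signVectors ι, c k * c k = 2 ^ Fintype.card ι := by
  rw [sum_congr rfl fun c hc => ?_, sum_const, card_signVectors, nsmul_one, Nat.cast_pow,
    Nat.cast_ofNat]
  · rcases mem_signVectors.1 hc k with h | h <;> simp [h]

lemma sum_signVectors_mul_of_ne {k l : ι} (hkl : k ≠ l) :
    ∑ c ∈ signVectors ι, c k * c l = 0 := by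
  have hprod (c : ι → ℝ) : c k * c l = ∏ i, if i ∈ ({k, l} : Finset ι) then c i else 1 := by
    rw [prod_ite_mem, univ_inter, prod_pair hkl]
  simp_rw [hprod]
  rw [signVectors, sum_prod_piFinset _ fun i x => if i ∈ ({k, l} : Finset ι) then x else 1]
  refine prod_eq_zero (mem_univ k) ?_
  simp [sum_pair (by norm_num : (1 : ℝ) ≠ -1)]

lemma sum_signVectors_norm_sum_smul_sq (v : ι → E) :
    ∑ c ∈ signVectors ι, ‖∑ i, c i • v i‖ ^ 2 = 2 ^ Fintype.card ι * ∑ i, ‖v i‖ ^ 2 := by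
  calc ∑ c ∈ signVectors ι, ‖∑ i, c i • v i‖ ^ 2
      = ∑ k, ∑ l, (∑ c ∈ signVectors ι, c k * c l) * ⟪v k, v l⟫ := by
        simp_rw [norm_sum_smul_sq, sum_mul]
        rw [sum_comm]
        exact sum_congr rfl fun k _ => sum_comm
    _ = ∑ k, 2 ^ Fintype.card ι * ⟪v k, v k⟫ := by
        refine sum_congr rfl fun k _ => ?_
        rw [sum_eq_single k (fun l _ hlk => by rw [sum_signVectors_mul_of_ne hlk.symm, zero_mul])
          (by simp), sum_signVectors_mul_self]
    _ = 2 ^ Fintype.card ι * ∑ i, ‖v i‖ ^ 2 := by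
        simp_rw [real_inner_self_eq_norm_sq, mul_sum]

def signsFlippedOn (A : Finset ι) (k : ι) : ℝ := if k ∈ A then -1 else 1

lemma signsFlippedOn_mem_signVectors (A : Finset ι) : signsFlippedOn A ∈ signVectors ι :=
  mem_signVectors.2 fun k => by unfold signsFlippedOn; split_ifs <;> simp

lemma sum_signsFlippedOn_smul (A : Finset ι) (v : ι → E) :
    ∑ k, signsFlippedOn A k • v k = ∑ k, v k - (2 : ℝ) • ∑ k ∈ A, v k := by
  have h : ∀ k, signsFlippedOn A k • v k = v k - (2 : ℝ) • if k ∈ A then v k else 0 := by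
    intro k; unfold signsFlippedOn; split_ifs <;> module
  simp_rw [h, sum_sub_distrib, ← smul_sum, sum_ite_mem, univ_inter]

theorem exists_mem_signVectors_sum_norm_sq_lt (v : ι → E) {i j : ι} (hij : i ≠ j)
    (hv : ⟪v i, v j⟫ ≠ 0) : ∃ c ∈ signVectors ι, ∑ k, ‖v k‖ ^ 2 < ‖∑ k, c k • v k‖ ^ 2 := by
  by_contra! hle
  have heq := (sum_eq_sum_iff_of_le hle).1 (by
    rw [sum_signVectors_norm_sum_smul_sq, sum_const, card_signVectors, nsmul_eq_mul]
    push_cast; ring)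
  have hflip (A : Finset ι) : ‖∑ k, v k - (2 : ℝ) • ∑ k ∈ A, v k‖ ^ 2 = ∑ k, ‖v k‖ ^ 2 := by
    rw [← sum_signsFlippedOn_smul]
    exact heq _ (signsFlippedOn_mem_signVectors A)
  have h0 := hflip ∅
  have hi := hflip {i}
  have hj := hflip {j}
  have hboth := hflip {i, j}
  simp only [sum_empty, smul_zero, sub_zero, sum_singleton, sum_pair hij] at h0 hi hj hboth
  apply hv
  rw [real_inner_eq_norm_sq_sub_two_smul_div_eight (∑ k, v k), h0, hi, hj, hboth]
  ring

end

theorem stmt10_general {n : ℕ} (S : Submodule ℝ (EuclideanSpace ℝ (Fin n)))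
    (e : Fin n → EuclideanSpace ℝ (Fin n))
    (h : ¬ (∀ i j, i ≠ j →
      inner ℝ ((S.orthogonalProjection (e i) : EuclideanSpace ℝ (Fin n)))
        ((S.orthogonalProjection (e j) : EuclideanSpace ℝ (Fin n))) = (0 : ℝ))) :
    ∃ c : Fin n → ℝ, (∀ i, c i = 1 ∨ c i = -1) ∧
      (∑ i, ‖(S.orthogonalProjection (e i) : EuclideanSpace ℝ (Fin n))‖ ^ 2) <
      ‖(S.orthogonalProjection (∑ i, c i • e i) : EuclideanSpace ℝ (Fin n))‖ ^ 2 := by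
  push Not at h
  obtain ⟨i, j, hij, hne⟩ := h
  obtain ⟨c, hc, hlt⟩ := exists_mem_signVectors_sum_norm_sq_lt
    (fun k => (S.orthogonalProjectionOnto (e k) : EuclideanSpace ℝ (Fin n))) hij hne
  refine ⟨c, mem_signVectors.1 hc, ?_⟩
  simpa only [map_sum, map_smul, Submodule.coe_sum, Submodule.coe_smul] using hlt

theorem stmt10 {n : ℕ} (S : Submodule ℝ (EuclideanSpace ℝ (Fin n)))
    (e : Fin n → EuclideanSpace ℝ (Fin n))
    (he : ∀ i, e i = EuclideanSpace.single i (1 : ℝ))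
    (h : ¬ (∀ i j, i ≠ j →
      inner ℝ ((S.orthogonalProjection (e i) : EuclideanSpace ℝ (Fin n)))
        ((S.orthogonalProjection (e j) : EuclideanSpace ℝ (Fin n))) = (0 : ℝ))) :
    ∃ c : Fin n → ℝ, (∀ i, c i = 1 ∨ c i = -1) ∧
      (∑ i, ‖(S.orthogonalProjection (e i) : EuclideanSpace ℝ (Fin n))‖ ^ 2) <
      ‖(S.orthogonalProjection (∑ i, c i • e i) : EuclideanSpace ℝ (Fin n))‖ ^ 2 :=
  stmt10_general S e h
end
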